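/- For every integer k ≥ 1, arctan(c_k) = ∑_{j=1}^{k} arctan(b_j); in particular c_k = tan(π/4 − π/2^{k+2}). -/

import Mathlib

/-!
With `θₖ = π / 2 ^ (k + 2)`, the half-angle formulas give `aₖ = 2 cos (2θₖ)` and
`√(2 - aₖ) = 2 sin θₖ`, so `bₖ = tan θₖ`. The recursion for `c` is the tangent addition formula,
hence `arctan cₖ = θ₁ + ⋯ + θₖ = π / 4 - θₖ`, as long as the partial sums stay below `π / 4`,
which keeps `cₖ bₖ₊₁ < 1` and makes `arctan_add` applicable.
-/

open Real Finset

theorem eq_sqrtTwoAddSeries_of_rec {a : ℕ → ℝ} (ha1 : a 1 = √2)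
    (ha : ∀ k ≥ 1, a (k + 1) = √(2 + a k)) : ∀ k ≥ 1, a k = sqrtTwoAddSeries 0 k := by
  intro k hk
  induction k, hk using Nat.le_induction with
  | base => rw [ha1, sqrtTwoAddSeries_one]
  | succ k hk ih => rw [ha k hk, ih, sqrtTwoAddSeries]

theorem sqrt_two_sub_sqrtTwoAddSeries_div (n : ℕ) :
    √(2 - sqrtTwoAddSeries 0 n) / sqrtTwoAddSeries 0 (n + 1) = tan (π / 2 ^ (n + 2)) := by
  have hcos : cos (π / 2 ^ (n + 2)) = sqrtTwoAddSeries 0 (n + 1) / 2 := cos_pi_over_two_pow (n + 1)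
  rw [tan_eq_sin_div_cos, sin_pi_over_two_pow_succ, hcos, div_div_div_cancel_right₀ two_ne_zero]

theorem arctan_tan_pi_div_two_pow (n : ℕ) : arctan (tan (π / 2 ^ (n + 2))) = π / 2 ^ (n + 2) := by
  have hpos : 0 < π / 2 ^ (n + 2) := by positivity
  have hlt : π / 2 ^ (n + 2) < π / 2 :=
    div_lt_div_of_pos_left pi_pos two_pos (lt_self_pow₀ one_lt_two (by omega))
  exact arctan_tan (by linarith) hlt

theorem sum_Icc_div_two_pow (x : ℝ) (k : ℕ) :
    ∑ j ∈ Icc 1 k, x / 2 ^ (j + 2) = x / 4 - x / 2 ^ (k + 2) := by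
  induction k with
  | zero => norm_num
  | succ k ih =>
    rw [sum_Icc_succ_top (by omega), ih, pow_succ _ (k + 2)]
    ring

theorem arctan_eq_sum_arctan_of_tan_add_rec {b c : ℕ → ℝ} (hb : ∀ k ≥ 1, 0 ≤ b k)
    (hsum : ∀ k ≥ 1, ∑ j ∈ Icc 1 k, arctan (b j) < π / 4) (hc1 : c 1 = b 1)
    (hc : ∀ k ≥ 1, c (k + 1) = (c k + b (k + 1)) / (1 - c k * b (k + 1))) :
    ∀ k ≥ 1, arctan (c k) = ∑ j ∈ Icc 1 k, arctan (b j) := by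
  intro k hk
  induction k, hk using Nat.le_induction with
  | base => simp [hc1]
  | succ k hk ih =>
    have hsplit := sum_Icc_succ_top (by omega : 1 ≤ k + 1) fun j ↦ arctan (b j)
    have hck : c k < 1 := by
      rw [← arctan_lt_arctan_iff, arctan_one, ih]
      exact hsum k hk
    have hb_lt : b (k + 1) < 1 := by
      have hS : 0 ≤ ∑ j ∈ Icc 1 k, arctan (b j) :=
        sum_nonneg fun j hj ↦ arctan_nonneg.2 (hb j (mem_Icc.1 hj).1)
      rw [← arctan_lt_arctan_iff, arctan_one]
      linarith [hsum (k + 1) (by omega)]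
    have hprod : c k * b (k + 1) < 1 := by nlinarith [hb (k + 1) (by omega)]
    rw [hc k hk, ← arctan_add hprod, ih, hsplit]

theorem arctan_c_eq_partial_sum (a : ℕ → ℝ)
    (ha1 : a 1 = Real.sqrt 2)
    (ha : ∀ k ≥ 1, a (k + 1) = Real.sqrt (2 + a k))
    (b : ℕ → ℝ)
    (hb : ∀ k ≥ 1, b k = Real.sqrt (2 - a k) / a (k + 1))
    (c : ℕ → ℝ)
    (hc1 : c 1 = b 1)
    (hc : ∀ k ≥ 1, c (k + 1) = (c k + b (k + 1)) / (1 - c k * b (k + 1))) :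
    ∀ k ≥ 1, Real.arctan (c k) = ∑ j ∈ Finset.Icc 1 k, Real.arctan (b j) ∧
      c k = Real.tan (π / 4 - π / 2 ^ (k + 2)) := by
  have ha' := eq_sqrtTwoAddSeries_of_rec ha1 ha
  have hb_tan : ∀ k ≥ 1, b k = tan (π / 2 ^ (k + 2)) := fun k hk ↦ by
    rw [hb k hk, ha' k hk, ha' (k + 1) (by omega), sqrt_two_sub_sqrtTwoAddSeries_div]
  have hb_nonneg : ∀ k ≥ 1, 0 ≤ b k := fun k hk ↦ by
    rw [hb k hk, ha' (k + 1) (by omega)]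
    exact div_nonneg (sqrt_nonneg _) (sqrtTwoAddSeries_zero_nonneg _)
  have hsum : ∀ k ≥ 1, ∑ j ∈ Icc 1 k, arctan (b j) = π / 4 - π / 2 ^ (k + 2) := fun k _ ↦ by
    rw [← sum_Icc_div_two_pow]
    refine sum_congr rfl fun j hj ↦ ?_
    rw [hb_tan j (mem_Icc.1 hj).1, arctan_tan_pi_div_two_pow]
  have hsum_lt : ∀ k ≥ 1, ∑ j ∈ Icc 1 k, arctan (b j) < π / 4 := fun k hk ↦ by
    rw [hsum k hk]
    linarith [show 0 < π / 2 ^ (k + 2) by positivity]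
  intro k hk
  have hmain := arctan_eq_sum_arctan_of_tan_add_rec hb_nonneg hsum_lt hc1 hc k hk
  refine ⟨hmain, ?_⟩
  rw [← hsum k hk, ← hmain, tan_arctan]
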